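/- arXiv:2011.11793 — 9 statements merged into one kernel-verified Lean document; each statement's English description precedes it below -/
import Mathlib

section
/- A quasi-projective partially ordered set is either connected or an antichain. -/
/-!
Suppose `L` is neither connected nor an antichain, and pick `a < b`. The connected component
of `a`, seen as a map `L → Prop`, is monotone and (as `L` is disconnected) surjective, while the
up-set of `b` is monotone. Quasi-projectivity gives a monotone `φ` with `φ x` in the component
of `a` exactly when `b ≤ x`. Then `φ b` lies in that component and is comparable to `φ a`, so
`φ a` lies in it too, forcing `b ≤ a`.
-/

/-- A poset `L` is quasi-projective if for every poset `T`, every monotone map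
`f : L → T` and every surjective monotone map `j : L → T`, there is a monotone
`φ : L → L` with `j ∘ φ = f`. -/
def IsQuasiProjectivePoset (L : Type) [PartialOrder L] : Prop :=
  ∀ (T : Type) (_ : PartialOrder T) (f j : L → T),
    Monotone f → Monotone j → Function.Surjective j →
      ∃ φ : L → L, Monotone φ ∧ j ∘ φ = f

/-- A poset is connected if any two elements are joined by a finite sequence of
pairwise comparable elements. -/
def PosetConnected (L : Type) [PartialOrder L] : Prop :=
  ∀ a b : L, Relation.ReflTransGen (fun x y => x ≤ y ∨ y ≤ x) a b

/-- A poset is an antichain if no two distinct elements are comparable. -/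
def PosetAntichain (L : Type) [PartialOrder L] : Prop :=
  ∀ a b : L, a ≤ b → a = b

open Relation

theorem posetConnected_iff_eqvGen {L : Type} [PartialOrder L] :
    PosetConnected L ↔ ∀ a b : L, EqvGen (· ≤ ·) a b := by
  rw [PosetConnected, ← EqvGen.reflTransGen_symmGen]
  rfl

theorem Monotone.map_eqvGen_le {α β : Type*} [Preorder α] [Preorder β] {φ : α → β}
    (hφ : Monotone φ) {a b : α} (hab : EqvGen (· ≤ ·) a b) :
    EqvGen (· ≤ ·) (φ a) (φ b) := by
  induction hab with
  | rel x y hxy => exact .rel _ _ (hφ hxy)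
  | refl x => exact .refl _
  | symm x y _ ih => exact .symm _ _ ih
  | trans x y z _ _ ihxy ihyz => exact .trans _ _ _ ihxy ihyz

theorem monotone_eqvGen_le {α : Type*} [Preorder α] (a : α) :
    Monotone (EqvGen (· ≤ ·) a) :=
  fun _ _ hxy hax => .trans _ _ _ hax (.rel _ _ hxy)

theorem surjective_eqvGen_le_of_not_posetConnected {L : Type} [PartialOrder L]
    (hL : ¬PosetConnected L) (a : L) : Function.Surjective (EqvGen (· ≤ ·) a) := by
  obtain ⟨w, hw⟩ : ∃ w, ¬EqvGen (· ≤ ·) a w := by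
    by_contra! hconn
    exact hL <| posetConnected_iff_eqvGen.2 fun x y =>
      .trans _ _ _ (.symm _ _ (hconn x)) (hconn y)
  intro P
  by_cases hP : P
  · exact ⟨a, propext (iff_of_true (.refl a) hP)⟩
  · exact ⟨w, propext (iff_of_false hw hP)⟩

theorem IsQuasiProjectivePoset.posetAntichain_of_not_posetConnected {L : Type} [PartialOrder L]
    (h : IsQuasiProjectivePoset L) (hL : ¬PosetConnected L) : PosetAntichain L := by
  intro a b hab
  obtain ⟨φ, hφ, hφ_comm⟩ := h Prop inferInstance (b ≤ ·) (EqvGen (· ≤ ·) a)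
    (fun _ _ hxy hbx => hbx.trans hxy) (monotone_eqvGen_le a)
    (surjective_eqvGen_le_of_not_posetConnected hL a)
  have hcomp (x : L) : EqvGen (· ≤ ·) a (φ x) ↔ b ≤ x := by
    rw [← congrFun hφ_comm x]; rfl
  have hφa : EqvGen (· ≤ ·) a (φ a) :=
    .trans _ _ _ ((hcomp b).2 le_rfl) (.symm _ _ (hφ.map_eqvGen_le (.rel _ _ hab)))
  exact hab.antisymm ((hcomp a).1 hφa)

theorem quasiProjective_poset_connected_or_antichain (L : Type) [PartialOrder L]
    (h : IsQuasiProjectivePoset L) :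
    PosetConnected L ∨ PosetAntichain L :=
  or_iff_not_imp_left.2 h.posetAntichain_of_not_posetConnected
end

section
/- A partially ordered set is quasi-projective if and only if it is a chain or an antichain. -/
/-!
A chain is quasi-projective because any section of a surjective monotone map out of a chain is
monotone, and an antichain is because every self-map of it is monotone. Conversely, if `a, b`
are incomparable, gluing `a` below `b` (adding `x ≤ y` whenever `x ≤ a` and `b ≤ y`) gives a
coarser partial order on the same set. Projecting along the identity onto it, quasi-projectivity
forces every map that is monotone into the glued order to be monotone already; a pair `c < d`
then yields the map sending the up-set of `d` to `b` and everything else to `a`, which is not.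
-/

open Function

theorem monotone_of_rightInverse_of_total {L T : Type*} [Preorder L] [PartialOrder T]
    (htot : ∀ a b : L, a ≤ b ∨ b ≤ a) {j : L → T} (hj : Monotone j) {s : T → L}
    (hs : RightInverse s j) : Monotone s := by
  intro t t' htt'
  rcases htot (s t) (s t') with h | h
  · exact h
  · have ht't : t' ≤ t := hs t ▸ hs t' ▸ hj h
    rw [le_antisymm htt' ht't]

theorem isQuasiProjectivePoset_of_total {L : Type} [PartialOrder L]
    (htot : ∀ a b : L, a ≤ b ∨ b ≤ a) : IsQuasiProjectivePoset L :=
  fun _ _ f _ hf hj hsurj =>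
    ⟨surjInv hsurj ∘ f,
      (monotone_of_rightInverse_of_total htot hj (rightInverse_surjInv hsurj)).comp hf,
      funext fun x => surjInv_eq hsurj (f x)⟩

theorem isQuasiProjectivePoset_of_antichain {L : Type} [PartialOrder L]
    (hanti : ∀ a b : L, a ≤ b → a = b) : IsQuasiProjectivePoset L :=
  fun _ _ f _ _ _ hsurj =>
    ⟨surjInv hsurj ∘ f, fun x y hxy => hanti x y hxy ▸ le_rfl,
      funext fun x => surjInv_eq hsurj (f x)⟩

theorem IsQuasiProjectivePoset.monotone_symm_comp {L T : Type} [PartialOrder L] [PartialOrder T]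
    (hL : IsQuasiProjectivePoset L) (e : L ≃ T) (he : Monotone e) {f : L → T}
    (hf : Monotone f) : Monotone (e.symm ∘ f) := by
  obtain ⟨φ, hφ, heφ⟩ := hL T _ f e hf he e.surjective
  rwa [← heφ, ← Function.comp_assoc, e.symm_comp_self]

set_option linter.unusedVariables false in
/-- `L` with `a` glued below `b`: additionally `x ≤ y` whenever `x ≤ a` and `b ≤ y`. -/
def Glued {L : Type*} (a b : L) : Type _ := L

namespace Glued

variable {L : Type*} [PartialOrder L] {a b : L}

def toGlued : L ≃ Glued a b := Equiv.refl L

instance : Preorder (Glued a b) where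
  le x y := toGlued.symm x ≤ toGlued.symm y ∨ (toGlued.symm x ≤ a ∧ b ≤ toGlued.symm y)
  le_refl _ := Or.inl le_rfl
  le_trans := by
    rintro x y z (hxy | ⟨hxa, hby⟩) (hyz | ⟨hya, hbz⟩)
    · exact Or.inl (hxy.trans hyz)
    · exact Or.inr ⟨hxy.trans hya, hbz⟩
    · exact Or.inr ⟨hxa, hby.trans hyz⟩
    · exact Or.inr ⟨hxa, hbz⟩

theorem toGlued_le_toGlued_iff {x y : L} :
    toGlued x ≤ (toGlued y : Glued a b) ↔ x ≤ y ∨ (x ≤ a ∧ b ≤ y) :=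
  Iff.rfl

abbrev partialOrder (hba : ¬b ≤ a) : PartialOrder (Glued a b) where
  le_antisymm := by
    rintro x y (hxy | ⟨hxa, hby⟩) (hyx | ⟨hya, hbx⟩)
    · exact toGlued.symm.injective (le_antisymm hxy hyx)
    · exact absurd ((hbx.trans hxy).trans hya) hba
    · exact absurd ((hby.trans hyx).trans hxa) hba
    · exact absurd (hby.trans hya) hba

theorem monotone_toGlued : Monotone (toGlued : L → Glued a b) :=
  fun _ _ h => Or.inl h

theorem monotone_toGlued_ite (d : L) [DecidablePred (d ≤ ·)] :
    Monotone fun t => (toGlued (if d ≤ t then b else a) : Glued a b) := by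
  intro x y hxy
  dsimp only
  by_cases hdx : d ≤ x
  · rw [if_pos hdx, if_pos (hdx.trans hxy)]
  by_cases hdy : d ≤ y
  · rw [if_neg hdx, if_pos hdy, toGlued_le_toGlued_iff]
    exact Or.inr ⟨le_rfl, le_rfl⟩
  · rw [if_neg hdx, if_neg hdy]

end Glued

open Glued in
theorem IsQuasiProjectivePoset.total_of_lt {L : Type} [PartialOrder L]
    (hL : IsQuasiProjectivePoset L) {c d : L} (hcd : c < d) (a b : L) : a ≤ b ∨ b ≤ a := by
  classical
  refine or_iff_not_imp_right.2 fun hba => ?_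
  let := Glued.partialOrder hba
  have hmono := hL.monotone_symm_comp toGlued monotone_toGlued
    (monotone_toGlued_ite (a := a) (b := b) d)
  simpa [hcd.not_ge] using hmono hcd.le

theorem quasiProjective_poset_iff_chain_or_antichain (L : Type) [PartialOrder L] :
    IsQuasiProjectivePoset L ↔
      (∀ a b : L, a ≤ b ∨ b ≤ a) ∨ (∀ a b : L, a ≤ b → a = b) := by
  refine ⟨fun hL => ?_, fun h => h.elim isQuasiProjectivePoset_of_total
    isQuasiProjectivePoset_of_antichain⟩
  refine or_iff_not_imp_right.2 fun hanti => ?_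
  push Not at hanti
  obtain ⟨c, d, hcd, hne⟩ := hanti
  exact hL.total_of_lt (hcd.lt_of_ne hne)
end

section
/- Every chain (linearly ordered set) is a quasi-projective poset. -/
theorem Monotone.strictMono_of_rightInverse {α β : Type*} [LinearOrder α] [Preorder β]
    {j : α → β} {s : β → α} (hj : Monotone j) (hs : Function.RightInverse s j) :
    StrictMono s :=
  fun _ _ h => hj.reflect_lt (by rwa [hs, hs])

theorem isQuasiProjectivePoset_of_linearOrder (L : Type) [LinearOrder L] :
    IsQuasiProjectivePoset L := by
  intro T _ f j hf hj hsurj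
  have hsection := Function.rightInverse_surjInv hsurj
  exact ⟨Function.surjInv hsurj ∘ f, (hj.strictMono_of_rightInverse hsection).monotone.comp hf,
    by rw [← Function.comp_assoc, hsection.comp_eq_id, Function.id_comp]⟩

theorem chain_isQuasiProjectivePoset (L : Type) [PartialOrder L]
    (hchain : ∀ a b : L, a ≤ b ∨ b ≤ a) :
    IsQuasiProjectivePoset L :=
  letI : LinearOrder L :=
    { ‹PartialOrder L› with le_total := hchain, toDecidableLE := Classical.decRel _ }
  isQuasiProjectivePoset_of_linearOrder L
end

section
/- If a poset contains three distinct elements u, v, w with u < v, u < w, and v and w incomparable, then it is not quasi-projective. (Dually for v < u, w < u.) -/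
namespace IsQuasiProjectivePoset

variable {L : Type} [PartialOrder L]

theorem exists_monotone_comp_eq (hL : IsQuasiProjectivePoset L) {T : Type} [PartialOrder T]
    {f j : L → T} (hf : Monotone f) (hj : Monotone j) (hfj : Set.range f ⊆ Set.range j) :
    ∃ φ : L → L, Monotone φ ∧ j ∘ φ = f := by
  obtain ⟨φ, hφ, hcomp⟩ := hL (Set.range j) inferInstance
    (fun x => ⟨f x, hfj (Set.mem_range_self x)⟩) (Set.rangeFactorization j)
    (fun _ _ hxy => hf hxy) (fun _ _ hxy => hj hxy) Set.rangeFactorization_surjective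
  exact ⟨φ, hφ, congrArg (Subtype.val ∘ ·) hcomp⟩

open OrderDual in
theorem orderDual (hL : IsQuasiProjectivePoset L) : IsQuasiProjectivePoset Lᵒᵈ := by
  intro T _ f j hf hj hj_surj
  obtain ⟨φ, hφ, hcomp⟩ := hL Tᵒᵈ inferInstance (toDual ∘ f ∘ toDual) (toDual ∘ j ∘ toDual)
    hf.dual hj.dual hj_surj
  exact ⟨toDual ∘ φ ∘ ofDual, hφ.dual, hcomp⟩

end IsQuasiProjectivePoset

section Fork

variable {L : Type} [PartialOrder L] {a b c : L}

theorem not_isQuasiProjectivePoset_of_lt_of_incomparable_right (hab : a < b) (hcb : ¬ c ≤ b)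
    (hbc : ¬ b ≤ c) : ¬ IsQuasiProjectivePoset L := by
  intro hL
  let j : L → Lex (Prop × Prop) := fun x => toLex (b ≤ x, c ≤ x)
  let f : L → Lex (Prop × Prop) := fun x => max (j x) (j c)
  have hj : Monotone j := Prod.Lex.toLex_mono.comp
    (Monotone.prodMk (fun _ _ hxy h => h.trans hxy) (fun _ _ hxy h => h.trans hxy))
  have hfj : Set.range f ⊆ Set.range j := by
    rintro _ ⟨x, rfl⟩
    rcases max_choice (j x) (j c) with h | h
    · exact ⟨x, h.symm⟩
    · exact ⟨c, h.symm⟩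
  obtain ⟨φ, hφ, hcomp⟩ := hL.exists_monotone_comp_eq (hj.max monotone_const) hj hfj
  have hja : j a ≤ j c := by simp [j, Prod.Lex.toLex_le_toLex, hab.not_ge, hbc]
  have hjb : j c ≤ j b := by simp [j, Prod.Lex.toLex_le_toLex, hbc, lt_iff_le_not_ge]
  have hφa : j (φ a) = j c := (congrFun hcomp a).trans (max_eq_right hja)
  have hφb : j (φ b) = j b := (congrFun hcomp b).trans (max_eq_left hjb)
  have hc_le_φa : c ≤ φ a := by simpa [j, hbc] using congrArg (Prod.snd ∘ ofLex) hφa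
  have hc_not_le_φb : ¬ c ≤ φ b := by simpa [j, hcb] using congrArg (Prod.snd ∘ ofLex) hφb
  exact hc_not_le_φb (hc_le_φa.trans (hφ hab.le))

theorem not_isQuasiProjectivePoset_of_lt_of_incomparable_left (hab : a < b) (hca : ¬ c ≤ a)
    (hac : ¬ a ≤ c) : ¬ IsQuasiProjectivePoset L := fun hL =>
  not_isQuasiProjectivePoset_of_lt_of_incomparable_right (L := Lᵒᵈ) (a := OrderDual.toDual b)
    (b := OrderDual.toDual a) (c := OrderDual.toDual c) hab hac hca hL.orderDual

end Fork

theorem not_quasiProjective_of_fork_general (L : Type) [PartialOrder L]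
    (u v w : L)
    (hfork : (u < v ∧ u < w) ∨ (v < u ∧ w < u))
    (hincomp : ¬ v ≤ w ∧ ¬ w ≤ v) :
    ¬ IsQuasiProjectivePoset L := by
  rcases hfork with ⟨-, huw⟩ | ⟨-, hwu⟩
  · exact not_isQuasiProjectivePoset_of_lt_of_incomparable_right huw hincomp.1 hincomp.2
  · exact not_isQuasiProjectivePoset_of_lt_of_incomparable_left hwu hincomp.1 hincomp.2

theorem not_quasiProjective_of_fork (L : Type) [PartialOrder L]
    (u v w : L) (huv : u ≠ v) (huw : u ≠ w) (hvw : v ≠ w)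
    (hfork : (u < v ∧ u < w) ∨ (v < u ∧ w < u))
    (hincomp : ¬ v ≤ w ∧ ¬ w ≤ v) :
    ¬ IsQuasiProjectivePoset L :=
  not_quasiProjective_of_fork_general L u v w hfork hincomp
end

section
/- A loopless graph is quasi-projective if and only if it is a complete graph or an empty graph (has no edges). -/
/-!
A complete graph is quasi-projective because a lift `s ∘ f` of `f` along any section `s` of `j`
separates the endpoints of every edge, while for an edgeless graph every map is a homomorphism.
Conversely, let `G` have an edge `ab` and distinct non-adjacent vertices `u, v`. Every injective
map into the complete graph on `V` is a homomorphism, so we may take `j = id` and `f = σ` for a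
permutation `σ` with `σ a = u`, `σ b = v`; the only lift of `f` along `j` is then `σ` itself,
which sends the edge `ab` to the non-edge `uv`.
-/

/-- A simple (loopless) graph `G` is quasi-projective if for every graph `H`,
every homomorphism `f : G → H` and every surjective homomorphism `j : G → H`,
there is an endomorphism `φ` of `G` with `j ∘ φ = f`. -/
def SimpleGraph.IsQuasiProjective {V : Type} (G : SimpleGraph V) : Prop :=
  ∀ (W : Type) (H : SimpleGraph W) (f j : G →g H), Function.Surjective j →
    ∃ φ : G →g G, ∀ v, j (φ v) = f v

namespace SimpleGraph

variable {V : Type}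

theorem isQuasiProjective_top : (⊤ : SimpleGraph V).IsQuasiProjective := by
  intro W H f j hj
  choose s hs using hj
  refine ⟨⟨s ∘ f, fun {x y} hxy hs_eq => ?_⟩, fun v => hs (f v)⟩
  have hf_eq : f x = f y := by rw [← hs (f x), ← hs (f y)]; exact congrArg j hs_eq
  exact (H.ne_of_adj (f.map_rel hxy)) hf_eq

theorem isQuasiProjective_bot : (⊥ : SimpleGraph V).IsQuasiProjective := by
  intro W H f j hj
  choose s hs using hj
  exact ⟨⟨s ∘ f, fun h => h.elim⟩, fun v => hs (f v)⟩

theorem IsQuasiProjective.adj_of_adj {G : SimpleGraph V} (hG : G.IsQuasiProjective)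
    {a b u v : V} (hab : G.Adj a b) (huv : u ≠ v) : G.Adj u v := by
  obtain ⟨σ, hσa, hσb⟩ :=
    MulAction.is_two_pretransitive_iff.mp (Equiv.Perm.isMultiplyPretransitive V 2) hab.ne huv
  let f : G →g ⊤ := (Embedding.completeGraph σ.toEmbedding).toHom.comp (Hom.ofLE le_top)
  obtain ⟨φ, hφ⟩ := hG V ⊤ f (Hom.ofLE le_top) Function.surjective_id
  have hφa : φ a = u := (hφ a).trans hσa
  have hφb : φ b = v := (hφ b).trans hσb
  simpa only [hφa, hφb] using φ.map_rel hab

end SimpleGraph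

theorem simpleGraph_quasiProjective_iff_top_or_bot {V : Type} (G : SimpleGraph V) :
    G.IsQuasiProjective ↔ G = ⊤ ∨ G = ⊥ := by
  refine ⟨fun hG => ?_, ?_⟩
  · refine or_iff_not_imp_right.mpr fun hG_bot => ?_
    obtain ⟨a, b, hab⟩ := SimpleGraph.ne_bot_iff_exists_adj.mp hG_bot
    by_contra hG_top
    obtain ⟨u, v, huv, hnadj⟩ := SimpleGraph.ne_top_iff_exists_not_adj.mp hG_top
    exact hnadj (hG.adj_of_adj hab huv)
  · rintro (rfl | rfl)
    exacts [SimpleGraph.isQuasiProjective_top, SimpleGraph.isQuasiProjective_bot]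
end

section
/- A loopless directed graph is quasi-projective if and only if it is a complete digraph or an empty digraph. -/
/-!
Lifting a homomorphism `f` through a surjective homomorphism `j` along a section of `j` gives a
map that separates the ends of every arc, so quasi-projectivity holds whenever every
arc-separating self-map is an endomorphism, as happens for complete and for empty digraphs.
Conversely, taking `j = id` into the complete digraph on `V` shows that every permutation of a
quasi-projective digraph is an endomorphism; since permutations act 2-transitively, an arc and a
non-arc between distinct vertices cannot coexist.
-/

/-- A loopless digraph `(V, A)` is quasi-projective if for every loopless
digraph `(W, B)`, every homomorphism `f` and every surjective homomorphism `j`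
from `(V, A)` to `(W, B)`, there is an endomorphism `φ` with `j ∘ φ = f`. -/
def IsQuasiProjectiveDigraph {V : Type} (A : V → V → Prop) : Prop :=
  ∀ (W : Type) (B : W → W → Prop), Irreflexive B →
    ∀ f j : V → W, (∀ x y, A x y → B (f x) (f y)) → (∀ x y, A x y → B (j x) (j y)) →
      Function.Surjective j →
        ∃ φ : V → V, (∀ x y, A x y → A (φ x) (φ y)) ∧ j ∘ φ = f

open Function Equiv

theorem isQuasiProjectiveDigraph_of_forall_separating {V : Type} {A : V → V → Prop}
    (h : ∀ φ : V → V, (∀ x y, A x y → φ x ≠ φ y) → ∀ x y, A x y → A (φ x) (φ y)) :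
    IsQuasiProjectiveDigraph A := by
  intro W B hB f j hf _ hj
  refine ⟨surjInv hj ∘ f, h _ fun x y hxy hφ => ?_, by rw [← comp_assoc, comp_surjInv, id_comp]⟩
  have hfxy : f x = f y := injective_surjInv hj hφ
  exact hB (f x) (hfxy ▸ hf x y hxy)

theorem IsQuasiProjectiveDigraph.rel_apply_of_injective {V : Type} {A : V → V → Prop}
    (hQP : IsQuasiProjectiveDigraph A) (hA : Irreflexive A) {f : V → V} (hf : Injective f)
    {x y : V} (hxy : A x y) : A (f x) (f y) := by
  have ne_of_rel : ∀ {x y}, A x y → x ≠ y := fun h heq => hA _ (heq ▸ h)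
  obtain ⟨φ, hφ, hφf⟩ := hQP V (· ≠ ·) (fun _ h => h rfl) f id
    (fun _ _ h => hf.ne (ne_of_rel h)) (fun _ _ h => ne_of_rel h) surjective_id
  rw [id_comp] at hφf
  exact hφf ▸ hφ x y hxy

theorem complete_or_empty_of_perm_rel {V : Type} {A : V → V → Prop} (hA : Irreflexive A)
    (h : ∀ (σ : Perm V) {x y}, A x y → A (σ x) (σ y)) :
    (∀ x y : V, x ≠ y → A x y) ∨ ∀ x y : V, ¬ A x y := by
  by_contra! hne
  obtain ⟨⟨a, b, hab, hnab⟩, c, d, hcd⟩ := hne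
  have hcd_ne : c ≠ d := fun heq => hA c (heq ▸ hcd)
  obtain ⟨σ, hσc, hσd⟩ := MulAction.is_two_pretransitive_iff.mp
    (Perm.isMultiplyPretransitive V 2) hcd_ne hab
  rw [Perm.smul_def] at hσc hσd
  exact hnab (hσc ▸ hσd ▸ h σ hcd)

theorem digraph_quasiProjective_iff_complete_or_empty {V : Type}
    (A : V → V → Prop) (hA : Irreflexive A) :
    IsQuasiProjectiveDigraph A ↔
      (∀ x y : V, x ≠ y → A x y) ∨ (∀ x y : V, ¬ A x y) := by
  refine ⟨fun hQP => complete_or_empty_of_perm_rel hA fun σ _ _ =>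
    hQP.rel_apply_of_injective hA σ.injective, fun h => ?_⟩
  refine isQuasiProjectiveDigraph_of_forall_separating fun φ hφ x y hxy => ?_
  rcases h with hcomplete | hempty
  · exact hcomplete _ _ (hφ x y hxy)
  · exact absurd hxy (hempty x y)
end

section
/- In a quasi-projective graph with loops allowed that has at least one edge, every vertex has a loop. -/
/-- A graph with loops allowed `(V, E)` (with `E` symmetric) is quasi-projective
if for every such graph `(W, F)`, every homomorphism `f` and every surjective
homomorphism `j` from `(V, E)` to `(W, F)`, there is an endomorphism `φ` of
`(V, E)` with `j ∘ φ = f`. -/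
def IsQuasiProjectiveLoopGraph {V : Type} (E : V → V → Prop) : Prop :=
  ∀ (W : Type) (F : W → W → Prop), Symmetric F →
    ∀ f j : V → W, (∀ x y, E x y → F (f x) (f y)) → (∀ x y, E x y → F (j x) (j y)) →
      Function.Surjective j →
        ∃ φ : V → V, (∀ x y, E x y → E (φ x) (φ y)) ∧ j ∘ φ = f

/-- Test quasi-projectivity with `j = id` onto the complete graph with all loops on `V`;
this forces `φ = f`. -/
theorem IsQuasiProjectiveLoopGraph.map_rel {V : Type} {E : V → V → Prop}
    (hqp : IsQuasiProjectiveLoopGraph E) (f : V → V) {x y : V} (hxy : E x y) :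
    E (f x) (f y) := by
  obtain ⟨φ, hφ, rfl⟩ := hqp V (fun _ _ => True) (fun _ _ _ => trivial) f id
    (fun _ _ _ => trivial) (fun _ _ _ => trivial) Function.surjective_id
  exact hφ x y hxy

theorem loop_graph_qp_edge_implies_all_loops_general {V : Type} (E : V → V → Prop)
    (hqp : IsQuasiProjectiveLoopGraph E)
    (hedge : ∃ a b : V, E a b) :
    ∀ v : V, E v v := by
  intro v
  obtain ⟨a, b, hab⟩ := hedge
  exact hqp.map_rel (fun _ => v) hab

/-- In a quasi-projective graph with loops allowed that has at least one edge,
every vertex has a loop. -/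
theorem loop_graph_qp_edge_implies_all_loops {V : Type} (E : V → V → Prop)
    (hsymm : Symmetric E) (hqp : IsQuasiProjectiveLoopGraph E)
    (hedge : ∃ a b : V, E a b) :
    ∀ v : V, E v v :=
  loop_graph_qp_edge_implies_all_loops_general E hqp hedge
end

section
/- A graph with loops allowed is quasi-projective if and only if it is either (a) a complete graph in which every vertex has a loop, or (b) a graph with no edges between distinct vertices in which either no vertex has a loop or every vertex has a loop. -/
theorem isQuasiProjectiveLoopGraph_iff_forall_map_rel {V : Type} (E : V → V → Prop) :
    IsQuasiProjectiveLoopGraph E ↔ ∀ φ : V → V, ∀ x y, E x y → E (φ x) (φ y) := by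
  constructor
  · intro h φ
    obtain ⟨ψ, hψ, hψφ⟩ := h V (fun _ _ => True) (fun _ _ _ => trivial) φ id
      (fun _ _ _ => trivial) (fun _ _ _ => trivial) Function.surjective_id
    exact hψφ ▸ hψ
  · intro h W F _ f j _ _ hj
    obtain ⟨s, hs⟩ := hj.hasRightInverse
    exact ⟨s ∘ f, h (s ∘ f), funext fun x => hs (f x)⟩

theorem forall_map_rel_iff {V : Type} (E : V → V → Prop) :
    (∀ φ : V → V, ∀ x y, E x y → E (φ x) (φ y)) ↔
      ((∀ x y : V, E x y) ∨
        ((∀ x y : V, x ≠ y → ¬ E x y) ∧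
          ((∀ v : V, ¬ E v v) ∨ (∀ v : V, E v v)))) := by
  classical
  constructor
  · intro h
    by_cases hcross : ∃ a b : V, a ≠ b ∧ E a b
    · obtain ⟨a, b, hab, hE⟩ := hcross
      refine Or.inl fun x y => ?_
      simpa [Ne.symm hab] using h (fun z => if z = a then x else y) a b hE
    · push Not at hcross
      refine Or.inr ⟨hcross, ?_⟩
      by_cases hloop : ∃ u : V, E u u
      · obtain ⟨u, hu⟩ := hloop
        exact Or.inr fun v => h (fun _ => v) u u hu
      · exact Or.inl (not_exists.mp hloop)
  · rintro (hcomplete | ⟨hdiscrete, hloops⟩) φ x y hxy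
    · exact hcomplete _ _
    · obtain rfl : x = y := by_contra fun hne => hdiscrete x y hne hxy
      rcases hloops with hnoLoops | hallLoops
      · exact absurd hxy (hnoLoops x)
      · exact hallLoops _

theorem loop_graph_quasiProjective_iff_general {V : Type} (E : V → V → Prop) :
    IsQuasiProjectiveLoopGraph E ↔
      ((∀ x y : V, E x y) ∨
        ((∀ x y : V, x ≠ y → ¬ E x y) ∧
          ((∀ v : V, ¬ E v v) ∨ (∀ v : V, E v v)))) :=
  (isQuasiProjectiveLoopGraph_iff_forall_map_rel E).trans (forall_map_rel_iff E)

/-- A graph with loops allowed is quasi-projective iff it is a complete graph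
with all loops, or has no edges between distinct vertices and either no loops
or all loops. -/
theorem loop_graph_quasiProjective_iff {V : Type} (E : V → V → Prop)
    (hsymm : Symmetric E) :
    IsQuasiProjectiveLoopGraph E ↔
      ((∀ x y : V, E x y) ∨
        ((∀ x y : V, x ≠ y → ¬ E x y) ∧
          ((∀ v : V, ¬ E v v) ∨ (∀ v : V, E v v)))) :=
  loop_graph_quasiProjective_iff_general E
end

section
/- A finite point-line geometry is quasi-projective if and only if it is one of: (1) a geometry with no lines; (2) a geometry in which every pair of distinct points lies on a (two-point) singular line; (3) a geometry in which every point lies on a line containing all points (so every k points lie on a line for the common line size k = n). -/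
/-- `L` is a set of lines of a point-line geometry on `X`: each line has at
least two points and two distinct points lie on at most one common line. -/
def IsPointLineGeometry {X : Type} [Fintype X] [DecidableEq X]
    (L : Finset X → Prop) : Prop :=
  (∀ l, L l → 2 ≤ l.card) ∧
    (∀ l m, L l → L m → ∀ p q : X, p ≠ q →
      p ∈ l → q ∈ l → p ∈ m → q ∈ m → l = m)

/-- `f` is a homomorphism of point-line geometries: the image of every line is
either a single point or contained in a line of the target. -/
def IsPLGHom {X Y : Type} [Fintype X] [DecidableEq X] [Fintype Y] [DecidableEq Y]
    (L : Finset X → Prop) (K : Finset Y → Prop) (f : X → Y) : Prop :=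
  ∀ l, L l → (l.image f).card = 1 ∨ ∃ k, K k ∧ l.image f ⊆ k

/-- A finite point-line geometry is quasi-projective if for every finite
point-line geometry, every homomorphism `f` and every surjective homomorphism
`j` onto it, there is an endomorphism `φ` with `j ∘ φ = f`. -/
def IsQuasiProjectivePLG {X : Type} [Fintype X] [DecidableEq X]
    (L : Finset X → Prop) : Prop :=
  ∀ (Y : Type) (_ : Fintype Y) (_ : DecidableEq Y) (K : Finset Y → Prop),
    Nonempty Y → IsPointLineGeometry K →
    ∀ f j : X → Y, IsPLGHom L K f → IsPLGHom L K j → Function.Surjective j →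
      ∃ φ : X → X, IsPLGHom L L φ ∧ j ∘ φ = f

/-!
Quasi-projectivity amounts to every self-map being an endomorphism. If it is, `φ := s ∘ f` for a
section `s` of `j` does the job. Conversely, testing against `j = id` onto the geometry whose
only line is the whole of `X`, to which every map is a homomorphism, makes every `f` an
endomorphism.

If every self-map is an endomorphism, folding a line `l` onto any set of at most `|l|` points
shows that such a set lies on a line. In particular any two points are collinear, and a line `m`
with at least three points is everything: trading one point of `m` for an outside point `x`
gives a set sharing two points with `m`, so its line is `m` and `x ∈ m`.
-/

open Finset

theorem Finset.exists_subset_image_of_card_le {X : Type} [DecidableEq X] {S l : Finset X}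
    (hS : S.Nonempty) (hSl : S.card ≤ l.card) : ∃ φ : X → X, S ⊆ l.image φ := by
  obtain ⟨e⟩ : Nonempty (S ↪ l) := Function.Embedding.nonempty_of_card_le (by simpa using hSl)
  have : Nonempty S := hS.to_subtype
  refine ⟨fun x => if hx : x ∈ l then ((Function.invFun e ⟨x, hx⟩ : S) : X) else x,
    fun s hs => ?_⟩
  obtain ⟨⟨t, ht⟩, hts⟩ := Function.invFun_surjective e.injective ⟨s, hs⟩
  exact mem_image.mpr ⟨t, ht, by simp [ht, hts]⟩

/-- The clause `2 ≤ k.card` keeps this a geometry when `X` is a single point. -/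
def univLine (X : Type) [Fintype X] : Finset X → Prop :=
  fun k => k = univ ∧ 2 ≤ k.card

theorem isPointLineGeometry_univLine (X : Type) [Fintype X] [DecidableEq X] :
    IsPointLineGeometry (univLine X) :=
  ⟨fun _ hl => hl.2, fun _ _ hl hm _ _ _ _ _ _ _ => hl.1.trans hm.1.symm⟩

section

variable {X : Type} [Fintype X] [DecidableEq X] {L : Finset X → Prop}

theorem isPLGHom_univLine (hL : IsPointLineGeometry L) (f : X → X) :
    IsPLGHom L (univLine X) f :=
  fun l hl => Or.inr ⟨univ, ⟨rfl, (hL.1 l hl).trans (card_le_univ l)⟩, subset_univ _⟩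

theorem isQuasiProjectivePLG_of_forall_isPLGHom (hE : ∀ φ : X → X, IsPLGHom L L φ) :
    IsQuasiProjectivePLG L := by
  intro Y _ _ K _ _ f j _ _ hj
  exact ⟨fun x => Function.surjInv hj (f x), hE _, funext fun x => Function.surjInv_eq hj (f x)⟩

theorem IsQuasiProjectivePLG.isPLGHom [Nonempty X] (hL : IsPointLineGeometry L)
    (hQ : IsQuasiProjectivePLG L) (φ : X → X) : IsPLGHom L L φ := by
  obtain ⟨ψ, hψ, hψφ⟩ := hQ X _ _ (univLine X) ‹_› (isPointLineGeometry_univLine X) φ id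
    (isPLGHom_univLine hL φ) (isPLGHom_univLine hL id) Function.surjective_id
  rw [Function.id_comp] at hψφ
  exact hψφ ▸ hψ

theorem isPLGHom_of_univ (hU : L univ) (φ : X → X) : IsPLGHom L L φ :=
  fun _ _ => Or.inr ⟨univ, hU, subset_univ _⟩

theorem isPLGHom_of_forall_pair_line (hL : IsPointLineGeometry L)
    (h : ∀ p q : X, p ≠ q → ∃ l, L l ∧ l.card = 2 ∧ p ∈ l ∧ q ∈ l) (φ : X → X) :
    IsPLGHom L L φ := by
  intro l hl
  obtain ⟨p, hp, q, hq, hpq⟩ := one_lt_card.mp (hL.1 l hl)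
  obtain ⟨l', hl', hl'2, hpl', hql'⟩ := h p q hpq
  obtain rfl : l = l' := hL.2 l l' hl hl' p q hpq hp hq hpl' hql'
  obtain rfl : {p, q} = l :=
    eq_of_subset_of_card_le (insert_subset hp (singleton_subset_iff.mpr hq))
      (by rw [hl'2, card_pair hpq])
  by_cases hφ : φ p = φ q
  · left
    simp [hφ]
  · obtain ⟨k, hk, -, hpk, hqk⟩ := h (φ p) (φ q) hφ
    exact Or.inr ⟨k, hk, by simp [insert_subset_iff, hpk, hqk]⟩

theorem exists_line_superset_of_card_le (hE : ∀ φ : X → X, IsPLGHom L L φ) {l S : Finset X}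
    (hl : L l) (hS : 2 ≤ S.card) (hSl : S.card ≤ l.card) : ∃ k, L k ∧ S ⊆ k := by
  obtain ⟨φ, hφ⟩ := exists_subset_image_of_card_le (card_pos.mp (by omega)) hSl
  rcases hE φ l hl with h1 | ⟨k, hk, hlk⟩
  · have := card_le_card hφ
    omega
  · exact ⟨k, hk, hφ.trans hlk⟩

theorem exists_line_mem_mem (hL : IsPointLineGeometry L) (hE : ∀ φ : X → X, IsPLGHom L L φ)
    {l : Finset X} (hl : L l) {p q : X} (hpq : p ≠ q) : ∃ k, L k ∧ p ∈ k ∧ q ∈ k := by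
  obtain ⟨k, hk, hpqk⟩ := exists_line_superset_of_card_le hE hl (S := {p, q})
    (by rw [card_pair hpq]) (by rw [card_pair hpq]; exact hL.1 l hl)
  rw [insert_subset_iff, singleton_subset_iff] at hpqk
  exact ⟨k, hk, hpqk⟩

theorem eq_univ_of_three_le_card (hL : IsPointLineGeometry L)
    (hE : ∀ φ : X → X, IsPLGHom L L φ) {m : Finset X} (hm : L m) (h3 : 3 ≤ m.card) :
    m = univ := by
  refine eq_univ_iff_forall.mpr fun x => by_contra fun hx => ?_
  obtain ⟨y, hy⟩ := card_pos.mp (by omega : 0 < m.card)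
  have hcard : (insert x (m.erase y)).card = m.card := by
    rw [card_insert_of_notMem fun h => hx (mem_of_mem_erase h), card_erase_of_mem hy]
    omega
  obtain ⟨k, hk, hsub⟩ := exists_line_superset_of_card_le hE hm (by omega) hcard.le
  obtain ⟨u, hu, v, hv, huv⟩ :=
    one_lt_card.mp (show 1 < (m.erase y).card by rw [card_erase_of_mem hy]; omega)
  have hkm : k = m := hL.2 k m hk hm u v huv (hsub (mem_insert_of_mem hu))
    (hsub (mem_insert_of_mem hv)) (mem_of_mem_erase hu) (mem_of_mem_erase hv)
  exact hx (hkm ▸ hsub (mem_insert_self x _))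

end

/-- A finite point-line geometry is quasi-projective iff it has no lines, or
every pair of distinct points lies on a two-point (singular) line, or every
point lies on a line containing all the points. -/
theorem plg_quasiProjective_iff {X : Type} [Fintype X] [DecidableEq X]
    [Nonempty X] (L : Finset X → Prop) (hL : IsPointLineGeometry L) :
    IsQuasiProjectivePLG L ↔
      ((∀ l, ¬ L l) ∨
        (∀ p q : X, p ≠ q → ∃ l, L l ∧ l.card = 2 ∧ p ∈ l ∧ q ∈ l) ∨
        (∀ p : X, ∃ l, L l ∧ p ∈ l ∧ ∀ q : X, q ∈ l)) := by
  constructor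
  · intro hQ
    have hE := hQ.isPLGHom hL
    by_cases hnl : ∀ l, ¬ L l
    · exact Or.inl hnl
    obtain ⟨l₀, hl₀⟩ := not_forall_not.mp hnl
    by_cases h3 : ∃ m, L m ∧ 3 ≤ m.card
    · obtain ⟨m, hm, h3⟩ := h3
      obtain rfl := eq_univ_of_three_le_card hL hE hm h3
      exact Or.inr (Or.inr fun p => ⟨univ, hm, mem_univ p, mem_univ⟩)
    · simp only [not_exists, not_and, not_le] at h3
      refine Or.inr (Or.inl fun p q hpq => ?_)
      obtain ⟨k, hk, hpk, hqk⟩ := exists_line_mem_mem hL hE hl₀ hpq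
      exact ⟨k, hk, le_antisymm (Nat.le_of_lt_succ (h3 k hk)) (hL.1 k hk), hpk, hqk⟩
  · intro h
    apply isQuasiProjectivePLG_of_forall_isPLGHom
    rcases h with h | h | h
    · exact fun _ l hl => absurd hl (h l)
    · exact isPLGHom_of_forall_pair_line hL h
    · obtain ⟨l, hl, -, hall⟩ := h (Classical.arbitrary X)
      rw [eq_univ_iff_forall.mpr hall] at hl
      exact isPLGHom_of_univ hl
end
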